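/- Let N_φ, N_ψ ∈ ℂ with conj(N_ψ) N_φ = e/(2√π). Define φₙ(x) = (N_φ/(2ⁿ √(n!))) Hₙ(sinh x) e^{−cosh²x} and ψₙ(x) = (2N_ψ/√(n!)) Hₙ(sinh x) cosh x. Then for all n, m ≥ 0 the product conj(ψₘ) φₙ is Lebesgue integrable on ℝ and ∫_ℝ conj(ψₘ(x)) φₙ(x) dx = δ_{n,m}. -/

import Mathlib

/-!
Substituting `y = sinh x` (so `dy = cosh x dx`) and using `cosh² x = 1 + sinh² x`, the integral
of `conj(ψₘ) φₙ` becomes `e⁻¹` times the Gaussian-weighted product `∫ Hₘ Hₙ e^{-y²} dy`, which is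
`δₙₘ 2ⁿ n! √π`. For the latter, `(Hₙ e^{-y²})' = -Hₙ₊₁ e^{-y²}` lets one integrate by parts,
moving one index down on each side via `Hₘ₊₁' = 2(m+1) Hₘ`.
-/

open MeasureTheory

/-- The physicist's Hermite polynomials:
`H₀(y) = 1`, `Hₙ(y) = 2y H_{n−1}(y) − H_{n−1}′(y)`. -/
noncomputable def hermiteH : ℕ → ℝ → ℝ
  | 0 => fun _ => 1
  | n + 1 => fun y => 2 * y * hermiteH n y - deriv (hermiteH n) y

open Polynomial Real

noncomputable def physHermite : ℕ → ℝ[X]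
  | 0 => 1
  | n + 1 => 2 * X * physHermite n - derivative (physHermite n)

@[simp]
lemma physHermite_zero : physHermite 0 = 1 := rfl

lemma physHermite_succ (n : ℕ) :
    physHermite (n + 1) = 2 * X * physHermite n - derivative (physHermite n) := rfl

lemma hermiteH_eq_eval (n : ℕ) (y : ℝ) : hermiteH n y = (physHermite n).eval y := by
  induction n generalizing y with
  | zero => simp [hermiteH]
  | succ n ih =>
    have hfun : hermiteH n = fun y => (physHermite n).eval y := funext ih
    simp [hermiteH, physHermite_succ, hfun, Polynomial.deriv, ih]

lemma derivative_physHermite_succ (n : ℕ) :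
    derivative (physHermite (n + 1)) = C (2 * (n + 1) : ℝ) * physHermite n := by
  induction n with
  | zero => simp [physHermite_succ, ← C_ofNat]
  | succ n ih =>
    rw [physHermite_succ (n + 1), derivative_sub, derivative_mul, ih, derivative_C_mul,
      physHermite_succ n]
    simp only [derivative_mul, derivative_ofNat, derivative_X, map_mul, map_add, map_natCast,
      map_ofNat, map_one, Nat.cast_add, Nat.cast_one]
    ring

lemma hasDerivAt_physHermite_mul_exp_neg_sq (n : ℕ) (y : ℝ) :
    HasDerivAt (fun y => (physHermite n).eval y * exp (-y ^ 2))
      (-((physHermite (n + 1)).eval y * exp (-y ^ 2))) y := by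
  have hexp : HasDerivAt (fun y : ℝ => exp (-y ^ 2)) (exp (-y ^ 2) * -(2 * y)) y := by
    simpa using ((hasDerivAt_pow 2 y).neg).exp
  refine (((physHermite n).hasDerivAt y).fun_mul hexp).congr_deriv ?_
  simp only [physHermite_succ, eval_sub, eval_mul, eval_ofNat, eval_X]
  ring

lemma integrable_eval_mul_exp_neg_sq (q : ℝ[X]) :
    Integrable (fun y : ℝ => q.eval y * exp (-y ^ 2)) := by
  have hmon (i : ℕ) : Integrable (fun y : ℝ => y ^ i * exp (-y ^ 2)) := by
    simpa [Real.rpow_natCast] using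
      integrable_rpow_mul_exp_neg_mul_sq one_pos (s := i) (by linarith [i.cast_nonneg (α := ℝ)])
  simp_rw [eval_eq_sum_range, Finset.sum_mul, mul_assoc]
  exact integrable_finsetSum _ fun i _ => (hmon i).const_mul _

lemma integrable_eval_mul_eval_mul_exp_neg_sq (p q : ℝ[X]) :
    Integrable (fun y : ℝ => p.eval y * (q.eval y * exp (-y ^ 2))) := by
  simpa [mul_assoc] using integrable_eval_mul_exp_neg_sq (p * q)

lemma integral_eval_mul_physHermite_succ_mul_exp_neg_sq (q : ℝ[X]) (n : ℕ) :
    ∫ y, q.eval y * ((physHermite (n + 1)).eval y * exp (-y ^ 2))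
      = ∫ y, (derivative q).eval y * ((physHermite n).eval y * exp (-y ^ 2)) := by
  have := integral_mul_deriv_eq_deriv_mul_of_integrable
    (u := fun y => q.eval y) (u' := fun y => (derivative q).eval y)
    (v := fun y => (physHermite n).eval y * exp (-y ^ 2))
    (v' := fun y => -((physHermite (n + 1)).eval y * exp (-y ^ 2)))
    (fun y _ => q.hasDerivAt y) (fun y _ => hasDerivAt_physHermite_mul_exp_neg_sq n y)
    (by simpa [Pi.mul_def] using (integrable_eval_mul_eval_mul_exp_neg_sq q _).neg)
    (integrable_eval_mul_eval_mul_exp_neg_sq _ _)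
    (integrable_eval_mul_eval_mul_exp_neg_sq _ _)
  simpa [integral_neg] using this

lemma integral_physHermite_mul_physHermite_mul_exp_neg_sq (m n : ℕ) :
    ∫ y, (physHermite m).eval y * ((physHermite n).eval y * exp (-y ^ 2))
      = if n = m then 2 ^ n * n.factorial * √π else 0 := by
  induction n generalizing m with
  | zero =>
    cases m with
    | zero => simpa using integral_gaussian 1
    | succ k =>
      have := integral_eval_mul_physHermite_succ_mul_exp_neg_sq 1 k
      simp only [eval_one, one_mul, derivative_one, eval_zero, zero_mul, integral_zero] at this
      simpa [mul_comm] using this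
  | succ n ih =>
    rw [integral_eval_mul_physHermite_succ_mul_exp_neg_sq]
    cases m with
    | zero => simp
    | succ k =>
      simp only [derivative_physHermite_succ, eval_mul, eval_C, mul_assoc, integral_const_mul, ih,
        add_left_inj]
      split_ifs with h
      · subst h
        push_cast [Nat.factorial_succ]
        ring
      · simp

lemma integrable_cosh_smul_comp_sinh {E : Type*} [NormedAddCommGroup E] [NormedSpace ℝ E]
    {g : ℝ → E} (hg : Integrable g) : Integrable (fun x => cosh x • g (sinh x)) := by
  have h := (integrableOn_image_iff_integrableOn_abs_deriv_smul MeasurableSet.univ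
    (fun x _ => (hasDerivAt_sinh x).hasDerivWithinAt) sinh_injective.injOn g).mp
  simp only [Set.image_univ, sinh_surjective.range_eq, integrableOn_univ,
    abs_of_pos (cosh_pos _)] at h
  exact h hg

lemma integral_cosh_smul_comp_sinh {E : Type*} [NormedAddCommGroup E] [NormedSpace ℝ E]
    (g : ℝ → E) : ∫ x, cosh x • g (sinh x) = ∫ y, g y := by
  have h := integral_image_eq_integral_abs_deriv_smul MeasurableSet.univ
    (fun x _ => (hasDerivAt_sinh x).hasDerivWithinAt) sinh_injective.injOn g
  simp only [Set.image_univ, sinh_surjective.range_eq, setIntegral_univ,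
    abs_of_pos (cosh_pos _)] at h
  exact h.symm

lemma exp_neg_cosh_sq (x : ℝ) : exp (-cosh x ^ 2) = exp (-1) * exp (-sinh x ^ 2) := by
  rw [← exp_add, cosh_sq]
  ring_nf

/-- compatibility and biorthonormality of the families
`φₙ = (N_φ/(2ⁿ√(n!))) Hₙ(sinh x) e^{−cosh²x}` and
`ψₙ = (2N_ψ/√(n!)) Hₙ(sinh x) cosh x`. -/
theorem stmt12 (Nφ Nψ : ℂ)
    (hN : (starRingEnd ℂ) Nψ * Nφ = (Real.exp 1 / (2 * Real.sqrt Real.pi) : ℝ))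
    (φ ψ : ℕ → ℝ → ℂ)
    (hφdef : ∀ n : ℕ, φ n = fun x =>
      Nφ / ((2 : ℂ) ^ n * (Real.sqrt n.factorial : ℂ))
        * (hermiteH n (Real.sinh x) : ℂ) * (Real.exp (-(Real.cosh x) ^ 2) : ℂ))
    (hψdef : ∀ n : ℕ, ψ n = fun x =>
      2 * Nψ / (Real.sqrt n.factorial : ℂ)
        * (hermiteH n (Real.sinh x) : ℂ) * (Real.cosh x : ℂ)) :
    ∀ n m : ℕ,
      Integrable (fun x : ℝ => (starRingEnd ℂ) (ψ m x) * φ n x) volume ∧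
      ∫ x : ℝ, (starRingEnd ℂ) (ψ m x) * φ n x = if n = m then 1 else 0 := by
  intro n m
  set g : ℝ → ℝ := fun y => (physHermite m).eval y * ((physHermite n).eval y * exp (-y ^ 2))
  set c : ℂ := (starRingEnd ℂ) Nψ * Nφ *
    (2 * exp (-1) / (2 ^ n * √(n.factorial : ℝ) * √(m.factorial : ℝ)) : ℝ)
  have hintegrand : (fun x => (starRingEnd ℂ) (ψ m x) * φ n x)
      = fun x => c * (cosh x • (g (sinh x) : ℂ)) := by
    funext x
    simp only [hφdef, hψdef, g, c, map_mul, map_div₀, Complex.conj_ofReal, map_ofNat,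
      hermiteH_eq_eval, exp_neg_cosh_sq, Complex.real_smul]
    push_cast
    ring
  have hg : Integrable g := integrable_eval_mul_eval_mul_exp_neg_sq _ _
  have hG : Integrable (fun x => cosh x • (g (sinh x) : ℂ)) :=
    integrable_cosh_smul_comp_sinh (g := fun y => (g y : ℂ)) (hg.ofReal (𝕜 := ℂ))
  rw [hintegrand]
  refine ⟨hG.const_mul c, ?_⟩
  rw [integral_const_mul, integral_cosh_smul_comp_sinh (fun y => (g y : ℂ)),
    integral_complex_ofReal, integral_physHermite_mul_physHermite_mul_exp_neg_sq]
  split_ifs with h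
  · subst h
    simp only [c, hN]
    rw [← Complex.ofReal_mul, ← Complex.ofReal_mul, Complex.ofReal_eq_one, mul_assoc (2 ^ n : ℝ),
      Real.mul_self_sqrt (Nat.cast_nonneg _), exp_neg]
    field_simp
  · simp
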